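/- arXiv:2107.01720 — 3 statements merged into one kernel-verified Lean document; each statement's English description precedes it below -/
import Mathlib

section
/- For every integer ℓ ≥ 1 and real b > 0, Σ_{r=0}^ℓ (−1)^r · C(ℓ,r) · ψ(r+b) = −B(ℓ,b) = −Γ(ℓ)Γ(b)/Γ(ℓ+b), where B(ℓ,b) is the Beta function and ψ is the digamma function. -/
open Finset

/-- The digamma function: logarithmic derivative of the Gamma function. -/
noncomputable def digamma (x : ℝ) : ℝ := deriv (fun y => Real.log (Real.Gamma y)) x

lemma digamma_add_one {x : ℝ} (hx : 0 < x) : digamma (x + 1) = digamma x + 1 / x := by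
  have hG : DifferentiableAt ℝ (fun y => Real.log (Real.Gamma y)) x := by
    have hd : DifferentiableAt ℝ Real.Gamma x :=
      Real.differentiableAt_Gamma (fun m => ne_of_gt (by have := Nat.cast_nonneg (α := ℝ) m; linarith))
    exact hd.log (Real.Gamma_pos_of_pos hx).ne'
  have h1 : digamma (x + 1) = deriv (fun y => Real.log (Real.Gamma (y + 1))) x := by
    rw [digamma, ← deriv_comp_add_const (fun y => Real.log (Real.Gamma y)) 1]
  have h2 : (fun y => Real.log (Real.Gamma (y + 1)))
      =ᶠ[nhds x] fun y => Real.log y + Real.log (Real.Gamma y) := by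
    filter_upwards [eventually_gt_nhds hx] with y hy
    rw [Real.Gamma_add_one hy.ne', Real.log_mul hy.ne' (Real.Gamma_pos_of_pos hy).ne']
  rw [h1, h2.deriv_eq, deriv_fun_add (Real.differentiableAt_log hx.ne') hG,
    Real.deriv_log, digamma]
  rw [one_div]
  ring

lemma sum_pascal (n : ℕ) (f : ℕ → ℝ) :
    ∑ r ∈ Finset.range (n + 2), (-1 : ℝ) ^ r * ((n+1).choose r : ℝ) * f r
    = ∑ r ∈ Finset.range (n + 1), (-1 : ℝ) ^ r * (n.choose r : ℝ) * f r
      - ∑ r ∈ Finset.range (n + 1), (-1 : ℝ) ^ r * (n.choose r : ℝ) * f (r + 1) := by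
  rw [Finset.sum_range_succ' _ (n + 1)]
  have : ∀ r ∈ Finset.range (n + 1),
      (-1 : ℝ) ^ (r+1) * ((n+1).choose (r+1) : ℝ) * f (r+1)
      = (-1 : ℝ) ^ (r+1) * (n.choose r : ℝ) * f (r+1)
        + (-1 : ℝ) ^ (r+1) * (n.choose (r+1) : ℝ) * f (r+1) := by
    intro r _
    rw [Nat.choose_succ_succ]
    push_cast
    ring
  rw [Finset.sum_congr rfl this, Finset.sum_add_distrib]
  have hA := Finset.sum_range_succ (fun r => (-1:ℝ)^r * (n.choose r : ℝ) * f r) (n+1)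
  have hB := Finset.sum_range_succ' (fun r => (-1:ℝ)^r * (n.choose r : ℝ) * f r) (n+1)
  simp only [Nat.choose_succ_self, Nat.cast_zero, mul_zero, zero_mul, add_zero,
    Nat.choose_zero_right, Nat.cast_one, pow_zero, one_mul, mul_one] at hA hB
  have h4 : ∑ r ∈ Finset.range (n+1), (-1:ℝ)^(r+1) * (n.choose r : ℝ) * f (r+1)
      = - ∑ r ∈ Finset.range (n+1), (-1:ℝ)^r * (n.choose r : ℝ) * f (r+1) := by
    rw [← Finset.sum_neg_distrib]
    exact Finset.sum_congr rfl fun r _ => by ring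
  simp only [Nat.choose_zero_right, Nat.cast_one, pow_zero, one_mul, mul_one]
  linarith [hA, hB, h4]

theorem stmt_2 (ℓ : ℕ) (hℓ : 1 ≤ ℓ) (b : ℝ) (hb : 0 < b) :
    ∑ r ∈ Finset.range (ℓ + 1), (-1 : ℝ) ^ r * (ℓ.choose r : ℝ) * digamma ((r : ℝ) + b)
      = -(Real.Gamma ℓ * Real.Gamma b / Real.Gamma ((ℓ : ℝ) + b)) := by
  induction ℓ, hℓ using Nat.le_induction generalizing b with
  | base =>
    simp only [Finset.sum_range_succ, Finset.sum_range_zero, Nat.cast_one, Nat.cast_zero,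
      zero_add]
    have h1 : digamma ((1 : ℝ) + b) = digamma b + 1 / b := by
      rw [add_comm]; exact digamma_add_one hb
    have hG1 : Real.Gamma (1:ℝ) = 1 := Real.Gamma_one
    have hGb1 : Real.Gamma ((1:ℝ) + b) = b * Real.Gamma b := by
      rw [add_comm, Real.Gamma_add_one hb.ne']
    rw [h1, hG1, hGb1]
    have hGb := (Real.Gamma_pos_of_pos hb).ne'
    push_cast
    field_simp
    simp only [Nat.choose_zero_right, Nat.choose_self, Nat.cast_one]
    ring
  | succ n hn ih =>
    have key := sum_pascal n (fun r => digamma ((r : ℝ) + b))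
    push_cast at key ⊢
    rw [key]
    have h2 : ∑ r ∈ Finset.range (n + 1), (-1 : ℝ) ^ r * (n.choose r : ℝ) * digamma ((r:ℝ) + 1 + b)
        = ∑ r ∈ Finset.range (n + 1), (-1 : ℝ) ^ r * (n.choose r : ℝ) * digamma ((r : ℝ) + (b + 1)) := by
      apply Finset.sum_congr rfl
      intro r _
      congr 1
      ring
    rw [h2, ih b hb, ih (b+1) (by linarith)]
    have hGn := (Real.Gamma_pos_of_pos (show (0:ℝ) < n from by exact_mod_cast Nat.pos_of_ne_zero (by omega))).ne'
    have hGb := (Real.Gamma_pos_of_pos hb).ne'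
    have hnb : (0:ℝ) < (n:ℝ) + b := by positivity
    have hGnb := (Real.Gamma_pos_of_pos hnb).ne'
    have e1 : Real.Gamma ((n:ℝ) + 1) = n * Real.Gamma n := Real.Gamma_add_one (by exact_mod_cast Nat.pos_of_ne_zero (by omega) : (0:ℝ) < n).ne'
    have e2 : Real.Gamma ((n:ℝ) + (b + 1)) = ((n:ℝ) + b) * Real.Gamma ((n:ℝ) + b) := by
      rw [show (n:ℝ) + (b + 1) = ((n:ℝ) + b) + 1 by ring, Real.Gamma_add_one hnb.ne']
    have e3 : Real.Gamma ((n:ℝ) + 1 + b) = ((n:ℝ) + b) * Real.Gamma ((n:ℝ) + b) := by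
      rw [show (n:ℝ) + 1 + b = ((n:ℝ) + b) + 1 by ring, Real.Gamma_add_one hnb.ne']
    have eb : Real.Gamma (b + 1) = b * Real.Gamma b := Real.Gamma_add_one hb.ne'
    rw [e1, e2, e3, eb]
    field_simp
    ring
end

section
/- For every nonnegative integer ℓ and real numbers a, b with a − b not a nonpositive integer, Σ_{r=0}^ℓ (−1)^r · C(ℓ,r) · Γ(r+b)/Γ(r+a) = B(ℓ+a−b, b)/Γ(a−b), where B is the Beta function. -/
/-!
For `g_{a,b}(r) = Γ(r + b) / Γ(r + a)` the functional equation of `Γ` gives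
`Δ g_{a,b} = (b - a) g_{a+1,b}`, hence `Δ^ℓ g_{a,b} = (-1)^ℓ Γ(ℓ + a - b) / Γ(a - b) · g_{a+ℓ,b}`.
The alternating binomial sum is `(-1)^ℓ Δ^ℓ g_{a,b}(0)`, which is the Beta quotient.
-/

open Finset fwdDiff

-- `Δ_[1] ^[n]` needs the space: `]^` is a token of its own in Mathlib.
theorem sum_range_neg_one_pow_mul_choose_mul {R : Type*} [CommRing R] (f : ℕ → R) (n : ℕ) :
    ∑ k ∈ range (n + 1), (-1) ^ k * (n.choose k : R) * f k = (-1) ^ n * Δ_[1] ^[n] f 0 := by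
  rw [fwdDiff_iter_eq_sum_shift, mul_sum]
  refine sum_congr rfl fun k hk => ?_
  have hsign : (-1 : R) ^ n = (-1) ^ k * (-1) ^ (n - k) := by
    rw [← pow_add, Nat.add_sub_cancel' (Nat.lt_succ_iff.mp (mem_range.mp hk))]
  have hsq : ((-1 : R) ^ (n - k)) ^ 2 = 1 := by rw [← pow_mul, mul_comm, pow_mul]; norm_num
  rw [zsmul_eq_mul, zero_add, smul_eq_mul, mul_one, hsign]
  push_cast
  linear_combination -((-1) ^ k * (n.choose k : R) * f k) * hsq

lemma natCast_add_ne_neg_natCast {a : ℝ} (ha : ∀ m : ℕ, a ≠ -m) (r m : ℕ) : (r : ℝ) + a ≠ -m := by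
  intro h
  exact ha (r + m) (by push_cast; linarith)

lemma add_one_ne_neg_natCast {a : ℝ} (ha : ∀ m : ℕ, a ≠ -m) (m : ℕ) : a + 1 ≠ -m := by
  simpa [add_comm] using natCast_add_ne_neg_natCast ha 1 m

noncomputable def gammaRatio (a b : ℝ) (r : ℕ) : ℝ := Real.Gamma (r + b) / Real.Gamma (r + a)

lemma fwdDiff_gammaRatio {a b : ℝ} (ha : ∀ m : ℕ, a ≠ -m) (hb : ∀ m : ℕ, b ≠ -m) :
    Δ_[1] (gammaRatio a b) = (b - a) • gammaRatio (a + 1) b := by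
  funext r
  have hra : (r : ℝ) + a ≠ 0 := by simpa using natCast_add_ne_neg_natCast ha r 0
  have hrb : (r : ℝ) + b ≠ 0 := by simpa using natCast_add_ne_neg_natCast hb r 0
  have hΓa : Real.Gamma (r + a) ≠ 0 := Real.Gamma_ne_zero (natCast_add_ne_neg_natCast ha r)
  simp only [fwdDiff, gammaRatio, Pi.smul_apply, smul_eq_mul, Nat.cast_add, Nat.cast_one]
  rw [add_right_comm _ 1 a, add_right_comm _ 1 b, ← add_assoc, Real.Gamma_add_one hra, Real.Gamma_add_one hrb]
  field_simp
  ring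

lemma fwdDiff_iter_gammaRatio {a b : ℝ} (ha : ∀ m : ℕ, a ≠ -m) (hb : ∀ m : ℕ, b ≠ -m)
    (hab : ∀ m : ℕ, a - b ≠ -m) (n : ℕ) :
    Δ_[1] ^[n] (gammaRatio a b) =
      ((-1) ^ n * Real.Gamma (n + (a - b)) / Real.Gamma (a - b)) • gammaRatio (a + n) b := by
  induction n generalizing a with
  | zero =>
    have : Real.Gamma (a - b) ≠ 0 := Real.Gamma_ne_zero hab
    simp [this]
  | succ n ih =>
    have hab1 : ∀ m : ℕ, a + 1 - b ≠ -m := by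
      simpa only [add_sub_right_comm] using add_one_ne_neg_natCast hab
    have hab0 : a - b ≠ 0 := by simpa using hab 0
    rw [Function.iterate_succ_apply, fwdDiff_gammaRatio ha hb, fwdDiff_iter_const_smul,
      ih (add_one_ne_neg_natCast ha) hab1, smul_smul, add_sub_right_comm, Real.Gamma_add_one hab0]
    congr 1
    · push_cast
      rw [show (n : ℝ) + 1 + (a - b) = n + (a - b + 1) by ring, pow_succ]
      field_simp
      ring
    · push_cast; ring_nf

theorem stmt_3_general (ℓ : ℕ) (a b : ℝ) (hb : 0 < b) (hab : 0 < a - b) :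
    ∑ r ∈ Finset.range (ℓ + 1),
        (-1 : ℝ) ^ r * (ℓ.choose r : ℝ) * (Real.Gamma ((r : ℝ) + b) / Real.Gamma ((r : ℝ) + a))
      = (Real.Gamma ((ℓ : ℝ) + a - b) * Real.Gamma b / Real.Gamma ((ℓ : ℝ) + a)) /
          Real.Gamma (a - b) := by
  have not_neg_natCast {x : ℝ} (hx : 0 < x) (m : ℕ) : x ≠ -m := by
    have : (0 : ℝ) ≤ m := m.cast_nonneg
    linarith
  have hdiff := congrFun (fwdDiff_iter_gammaRatio (not_neg_natCast (x := a) (by linarith))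
    (not_neg_natCast hb) (not_neg_natCast hab) ℓ) 0
  change ∑ r ∈ range (ℓ + 1), (-1 : ℝ) ^ r * (ℓ.choose r : ℝ) * gammaRatio a b r = _
  rw [sum_range_neg_one_pow_mul_choose_mul, hdiff]
  simp only [gammaRatio, Pi.smul_apply, smul_eq_mul, Nat.cast_zero, zero_add]
  have hsign : (-1 : ℝ) ^ ℓ * (-1) ^ ℓ = 1 := by rw [← mul_pow]; norm_num
  rw [add_comm a, ← add_sub_assoc]
  linear_combination
    Real.Gamma (ℓ + a - b) * Real.Gamma b / (Real.Gamma (a - b) * Real.Gamma (ℓ + a)) * hsign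

theorem stmt_3 (ℓ : ℕ) (hℓ : 1 ≤ ℓ) (a b : ℝ) (hb : 0 < b) (hab : 0 < a - b) :
    ∑ r ∈ Finset.range (ℓ + 1),
        (-1 : ℝ) ^ r * (ℓ.choose r : ℝ) * (Real.Gamma ((r : ℝ) + b) / Real.Gamma ((r : ℝ) + a))
      = (Real.Gamma ((ℓ : ℝ) + a - b) * Real.Gamma b / Real.Gamma ((ℓ : ℝ) + a)) /
          Real.Gamma (a - b) :=
  stmt_3_general ℓ a b hb hab
end

section
/- For integers n ≥ 0, k ≥ 1, and real s > 0, Σ_{j=0}^{k} (−1)^j · Γ(n+2s+k)/(j!·(k−j)!·Γ(n+2s)) · h_s(n+j) = −1/k, where h_s(m) = Σ_{i=1}^m 1/(i+2s−1). -/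
/-!
With `x = n + 2s`, the ratio `Γ(x + k) / Γ(x)` is the rising factorial `x⁽ᵏ⁾` and
`1 / (j! (k - j)!) = C(k, j) / k!`, so the sum is `x⁽ᵏ⁾ / k!` times the alternating binomial sum
`∑ (-1)ʲ C(k, j) h_s(n + j) = (-1)ᵏ Δᵏ h_s(n)`. As `Δ h_s(m) = 1 / (m + 2s)` and the `(k-1)`-st
difference of `m ↦ 1 / (m + a)` is `(-1)ᵏ⁻¹ (k - 1)! / (m + a)⁽ᵏ⁾`, the rising factorials cancel
and the sum equals `-(k - 1)! / k! = -1 / k`.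
-/

open Finset

/-- Shifted harmonic numbers `h_s(m) = ∑_{i=1}^m 1/(i+2s-1)`. -/
noncomputable def hShift (s : ℝ) (m : ℕ) : ℝ := ∑ i ∈ Finset.Icc 1 m, 1 / ((i : ℝ) + 2 * s - 1)

open Polynomial

theorem Real.Gamma_add_nat_eq_ascPochhammer_mul {x : ℝ} (hx : 0 < x) (k : ℕ) :
    Real.Gamma (x + k) = (ascPochhammer ℝ k).eval x * Real.Gamma x := by
  induction k with
  | zero => simp
  | succ k ih =>
    rw [Nat.cast_succ, ← add_assoc, Real.Gamma_add_one (by positivity), ih,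
      ascPochhammer_succ_eval]
    ring

lemma ascPochhammer_eval_succ_left {R : Type*} [CommSemiring R] (k : ℕ) (x : R) :
    (ascPochhammer R (k + 1)).eval x = x * (ascPochhammer R k).eval (x + 1) := by
  simp [ascPochhammer_succ_left, eval_comp]

lemma sum_range_neg_one_pow_mul_choose_mul_eq_fwdDiff_iter {R : Type*} [CommRing R]
    (f : ℕ → R) (k n : ℕ) :
    ∑ j ∈ range (k + 1), (-1) ^ j * (k.choose j : R) * f (n + j)
      = (-1) ^ k * (fwdDiff 1)^[k] f n := by
  rw [fwdDiff_iter_eq_sum_shift, mul_sum]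
  refine sum_congr rfl fun j hj => ?_
  obtain ⟨i, rfl⟩ := Nat.exists_eq_add_of_le (Nat.le_of_lt_succ (mem_range.1 hj))
  have hsq : ((-1 : R) ^ i) ^ 2 = 1 := by rw [← pow_mul, pow_mul', neg_one_sq, one_pow]
  rw [Nat.add_sub_cancel_left, zsmul_eq_mul, smul_eq_mul, mul_one, pow_add]
  push_cast
  linear_combination -(-1 : R) ^ j * ((j + i).choose j : R) * f (n + j) * hsq

lemma fwdDiff_iter_inv_natCast_add {a : ℝ} (ha : 0 < a) (k m : ℕ) :
    (fwdDiff 1)^[k] (fun i : ℕ => ((i : ℝ) + a)⁻¹) m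
      = (-1) ^ k * k.factorial / (ascPochhammer ℝ (k + 1)).eval (m + a) := by
  induction k generalizing m with
  | zero => simp
  | succ k ih =>
    set x : ℝ := (m : ℝ) + a with hx_def
    have hx : 0 < x := by positivity
    have hP := ascPochhammer_pos k (x + 1) (by positivity)
    rw [Function.iterate_succ_apply', fwdDiff, ih, ih, Nat.cast_add_one, add_right_comm, ← hx_def,
      ascPochhammer_succ_eval, ascPochhammer_eval_succ_left k, ascPochhammer_eval_succ_left (k + 1),
      ascPochhammer_succ_eval, Nat.factorial_succ]
    field_simp
    push_cast
    ring

lemma fwdDiff_hShift (s : ℝ) (m : ℕ) : fwdDiff 1 (hShift s) m = ((m : ℝ) + 2 * s)⁻¹ := by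
  rw [fwdDiff, hShift, hShift, sum_Icc_succ_top (by omega), add_sub_cancel_left]
  push_cast
  ring_nf

theorem stmt_5 (n k : ℕ) (hk : 1 ≤ k) (s : ℝ) (hs : 0 < s) :
    ∑ j ∈ Finset.range (k + 1),
        (-1 : ℝ) ^ j * Real.Gamma ((n : ℝ) + 2 * s + k) /
            ((j.factorial : ℝ) * ((k - j).factorial : ℝ) * Real.Gamma ((n : ℝ) + 2 * s)) *
          hShift s (n + j)
      = -(1 / (k : ℝ)) := by
  obtain ⟨m, rfl⟩ := Nat.exists_eq_add_of_le' hk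
  set x : ℝ := (n : ℝ) + 2 * s
  have hx : 0 < x := by positivity
  have hΓ := Real.Gamma_add_nat_eq_ascPochhammer_mul hx (m + 1)
  have hΓx := (Real.Gamma_pos_of_pos hx).ne'
  have hP := (ascPochhammer_pos (m + 1) x hx).ne'
  have hdiff : (fwdDiff 1)^[m + 1] (hShift s) n
      = (-1) ^ m * m.factorial / (ascPochhammer ℝ (m + 1)).eval x := by
    rw [Function.iterate_succ_apply, show fwdDiff 1 (hShift s) = _ from funext (fwdDiff_hShift s)]
    exact fwdDiff_iter_inv_natCast_add (by positivity) m n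
  calc _ = (ascPochhammer ℝ (m + 1)).eval x / (m + 1).factorial *
        ∑ j ∈ range (m + 1 + 1), (-1) ^ j * ((m + 1).choose j : ℝ) * hShift s (n + j) := by
        rw [mul_sum]
        refine sum_congr rfl fun j hj => ?_
        rw [hΓ, Nat.cast_choose ℝ (Nat.le_of_lt_succ (mem_range.1 hj))]
        field_simp
    _ = -(1 / ((m + 1 : ℕ) : ℝ)) := by
        have hsq : ((-1 : ℝ) ^ m) ^ 2 = 1 := by rw [← pow_mul, pow_mul', neg_one_sq, one_pow]
        rw [sum_range_neg_one_pow_mul_choose_mul_eq_fwdDiff_iter, hdiff, Nat.factorial_succ]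
        field_simp
        push_cast
        linear_combination -((m.factorial : ℝ) * (m + 1)) * hsq
end
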